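/- arXiv:1904.09026 — 4 statements merged into one kernel-verified Lean document; each statement's English description precedes it below -/
import Mathlib

section
/- Let γ : ℕ → ℝ with γ(n) > 0 for all n and γ(0) = 1. If λ is a complex number with |λ| = 1, 0 < r < 1, and ∑_{n≥1} γ(n) r^{2n} = ∑_{n≥1} γ(n) Re(conj(λ)^n) r^{2n} (both series converging), then λ = 1. -/
open Complex

/-
Since `‖conj λ ^ n‖ = 1`, each term `γ(n) Re(conj λ ^ n) r^{2n}` is at most `γ(n) r^{2n}`.
Equal sums of termwise comparable series force termwise equality, so in particular
`Re(conj λ) = 1`, and a unit complex number with real part `1` is `1`.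
-/

theorem Summable.apply_eq_of_tsum_eq_of_le {ι α : Type*} [AddCommGroup α] [PartialOrder α]
    [IsOrderedAddMonoid α] [TopologicalSpace α] [IsTopologicalAddGroup α] [OrderClosedTopology α]
    {f g : ι → α} (hle : f ≤ g) (hf : Summable f) (hg : Summable g)
    (heq : ∑' i, f i = ∑' i, g i) (i : ι) : f i = g i := by
  by_contra hne
  exact (hf.tsum_lt_tsum hle (lt_of_le_of_ne (hle i) hne) hg).ne heq

theorem Complex.eq_one_of_norm_eq_one_of_re_eq_one {z : ℂ} (hz : ‖z‖ = 1) (hre : z.re = 1) :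
    z = 1 := by
  have him : z.im = 0 := abs_re_eq_norm.mp (by rw [hre, hz, abs_one])
  exact Complex.ext hre him

theorem mul_re_mul_le_mul {a b : ℝ} (ha : 0 ≤ a) (hb : 0 ≤ b) {w : ℂ} (hw : ‖w‖ = 1) :
    a * w.re * b ≤ a * b := by
  have hre : w.re ≤ 1 := hw ▸ re_le_norm w
  nlinarith [mul_nonneg ha hb]

theorem stmt0_general (γ : ℕ → ℝ) (hpos : ∀ n, 0 < γ n)
    (l : ℂ) (hl : ‖l‖ = 1) (r : ℝ) (hr0 : 0 < r)
    (h1 : Summable (fun n : ℕ => γ (n + 1) * r ^ (2 * (n + 1))))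
    (h2 : Summable (fun n : ℕ => γ (n + 1) * (((starRingEnd ℂ) l) ^ (n + 1)).re * r ^ (2 * (n + 1))))
    (heq : ∑' n : ℕ, γ (n + 1) * r ^ (2 * (n + 1))
         = ∑' n : ℕ, γ (n + 1) * (((starRingEnd ℂ) l) ^ (n + 1)).re * r ^ (2 * (n + 1))) :
    l = 1 := by
  have hle : (fun n : ℕ => γ (n + 1) * (((starRingEnd ℂ) l) ^ (n + 1)).re * r ^ (2 * (n + 1)))
      ≤ fun n : ℕ => γ (n + 1) * r ^ (2 * (n + 1)) := fun n =>
    mul_re_mul_le_mul (hpos _).le (by positivity) (by rw [norm_pow, norm_conj, hl, one_pow])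
  have hfirst : γ 1 * ((starRingEnd ℂ) l).re * r ^ 2 = γ 1 * r ^ 2 := by
    simpa using h2.apply_eq_of_tsum_eq_of_le hle h1 heq.symm 0
  have hre : l.re = 1 := by
    have hne : γ 1 * r ^ 2 ≠ 0 := by have := hpos 1; positivity
    rw [conj_re] at hfirst
    exact mul_left_cancel₀ hne (by linear_combination hfirst)
  exact eq_one_of_norm_eq_one_of_re_eq_one hl hre

/-- If `γ n > 0`, `γ 0 = 1`, `|λ| = 1`, `0 < r < 1` and
`∑_{n≥1} γ(n) r^{2n} = ∑_{n≥1} γ(n) Re(conj(λ)^n) r^{2n}` (both converging), then `λ = 1`. -/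
theorem stmt0 (γ : ℕ → ℝ) (hpos : ∀ n, 0 < γ n) (hγ0 : γ 0 = 1)
    (l : ℂ) (hl : ‖l‖ = 1) (r : ℝ) (hr0 : 0 < r) (hr1 : r < 1)
    (h1 : Summable (fun n : ℕ => γ (n + 1) * r ^ (2 * (n + 1))))
    (h2 : Summable (fun n : ℕ => γ (n + 1) * (((starRingEnd ℂ) l) ^ (n + 1)).re * r ^ (2 * (n + 1))))
    (heq : ∑' n : ℕ, γ (n + 1) * r ^ (2 * (n + 1))
         = ∑' n : ℕ, γ (n + 1) * (((starRingEnd ℂ) l) ^ (n + 1)).re * r ^ (2 * (n + 1))) :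
    l = 1 :=
  stmt0_general γ hpos l hl r hr0 h1 h2 heq
end

section
/- Let a ∈ 𝔻, a ≠ 0, and λ with |λ| = 1. For every b ∈ [0, |a|] there exists τ with |τ| = 1 such that |conj(τ)·a·(λτ − 1)/(λτ − |a|²)| = b. -/
/-!
On the unit circle `λτ` stays away from the real number `|a|² < 1`, so `τ ↦ |c(τ)|` is
continuous on the connected circle. It vanishes at `τ = conj λ` and equals
`2|a| / (1 + |a|²) ≥ |a|` at `τ = -conj λ`; the intermediate value theorem gives the rest.
-/

open Complex ComplexConjugate

/-- The paper's `c(τ)`, with `|a|²` replaced by an arbitrary real `s`. -/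
noncomputable def circleCoeff (a l : ℂ) (s : ℝ) (τ : ℂ) : ℂ :=
  conj τ * a * (l * τ - 1) / (l * τ - s)

lemma sub_ofReal_ne_zero_of_norm_eq_one {w : ℂ} (hw : ‖w‖ = 1) {s : ℝ} (hs : |s| < 1) :
    w - s ≠ 0 := by
  rw [sub_ne_zero]
  rintro rfl
  rw [norm_real, Real.norm_eq_abs] at hw
  exact hs.ne hw

lemma mul_conj_of_norm_eq_one {l : ℂ} (hl : ‖l‖ = 1) : l * conj l = 1 := by
  rw [mul_conj', hl, ofReal_one, one_pow]

section

variable (a : ℂ) {l : ℂ} (s : ℝ)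

lemma continuousOn_norm_circleCoeff (hl : ‖l‖ = 1) (hs : |s| < 1) :
    ContinuousOn (fun τ ↦ ‖circleCoeff a l s τ‖) (Metric.sphere 0 1) := by
  refine (ContinuousOn.div (by fun_prop) (by fun_prop) fun τ hτ ↦ ?_).norm
  refine sub_ofReal_ne_zero_of_norm_eq_one ?_ hs
  rw [norm_mul, hl, mem_sphere_zero_iff_norm.mp hτ, one_mul]

lemma circleCoeff_conj (hl : ‖l‖ = 1) : circleCoeff a l s (conj l) = 0 := by
  simp [circleCoeff, mul_conj_of_norm_eq_one hl]

lemma norm_circleCoeff_neg_conj (hl : ‖l‖ = 1) (hs : 0 ≤ s) :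
    ‖circleCoeff a l s (-conj l)‖ = ‖a‖ * (2 / (1 + s)) := by
  have h2 : ‖(-1 - 1 : ℂ)‖ = 2 := by norm_num
  have h1s : ‖(-1 - s : ℂ)‖ = 1 + s := by
    rw [← neg_add', norm_neg, ← ofReal_one, ← ofReal_add, norm_real,
      Real.norm_of_nonneg (by positivity)]
  rw [circleCoeff, mul_neg, mul_conj_of_norm_eq_one hl, norm_div, norm_mul, norm_mul, map_neg,
    conj_conj, norm_neg, hl, one_mul, h2, h1s, mul_div_assoc]

end

theorem stmt8_general (a l : ℂ) (ha : ‖a‖ < 1) (hl : ‖l‖ = 1) :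
    ∀ b ∈ Set.Icc (0 : ℝ) (‖a‖), ∃ τ : ℂ, ‖τ‖ = 1 ∧
      ‖((starRingEnd ℂ) τ * a * (l * τ - 1)
        / (l * τ - ((‖a‖ : ℝ) ^ 2 : ℝ)))‖ = b := by
  intro b ⟨hb0, hba⟩
  set s : ℝ := ‖a‖ ^ 2
  have hs0 : 0 ≤ s := by positivity
  have hs1 : s < 1 := pow_lt_one₀ (norm_nonneg a) ha two_ne_zero
  have hconj : conj l ∈ Metric.sphere (0 : ℂ) 1 := by simpa using hl
  have hb : b ∈ Set.Icc ‖circleCoeff a l s (conj l)‖ ‖circleCoeff a l s (-conj l)‖ := by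
    rw [circleCoeff_conj a s hl, norm_zero, norm_circleCoeff_neg_conj a s hl hs0]
    refine ⟨hb0, hba.trans (le_mul_of_one_le_right (norm_nonneg a) ?_)⟩
    rw [one_le_div (by positivity)]
    linarith
  have hcircle : IsPreconnected (Metric.sphere (0 : ℂ) 1) :=
    isPreconnected_sphere (by simp [rank_real_complex]) 0 1
  obtain ⟨τ, hτ, hτb⟩ := hcircle.intermediate_value hconj (by simpa using hconj)
    (continuousOn_norm_circleCoeff a s hl (abs_lt.mpr ⟨by linarith, hs1⟩)) hb
  exact ⟨τ, mem_sphere_zero_iff_norm.mp hτ, hτb⟩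

/-- For `a ∈ 𝔻 \ {0}`, `|λ| = 1`, and every `b ∈ [0, |a|]` there is a unimodular `τ` with
`|conj(τ)·a·(λτ − 1)/(λτ − |a|²)| = b`. -/
theorem stmt8 (a l : ℂ) (ha : ‖a‖ < 1) (ha0 : a ≠ 0) (hl : ‖l‖ = 1) :
    ∀ b ∈ Set.Icc (0 : ℝ) (‖a‖), ∃ τ : ℂ, ‖τ‖ = 1 ∧
      ‖((starRingEnd ℂ) τ * a * (l * τ - 1)
        / (l * τ - ((‖a‖ : ℝ) ^ 2 : ℝ)))‖ = b :=
  stmt8_general a l ha hl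
end

section
/- Let γ(n) > 0, γ(0) = 1, with K(z,w) = ∑ γ(n)(conj(w)z)^n convergent on 𝔻 × 𝔻. If analytic functions F : 𝔻 → ℂ and φ : 𝔻 → 𝔻 satisfy F(z)conj(F(w))K(φ(z),φ(w)) = K(z,w) for all z, w ∈ 𝔻, then φ is injective on 𝔻. -/
open Complex Metric ComplexConjugate

/-!
If `φ a = φ b`, putting `w = 0` (where `K(·, 0) = 1`) in the functional equation gives
`F a = F b`, hence `K(a, w) = K(b, w)` for every `w`. Then
`K(a, a) + K(b, b) - K(a, b) - K(b, a) = ∑ γ(n) |aⁿ - bⁿ|²` vanishes; all terms are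
nonnegative, and the term `n = 1` is `γ(1) |a - b|²`, so `a = b`.
-/

noncomputable def weightedKernel (γ : ℕ → ℝ) (z w : ℂ) : ℂ :=
  ∑' n : ℕ, (γ n : ℂ) * (conj w * z) ^ n

theorem weightedKernel_zero_right {γ : ℕ → ℝ} (hγ0 : γ 0 = 1) (z : ℂ) :
    weightedKernel γ z 0 = 1 := by
  rw [weightedKernel, tsum_eq_single 0 fun n hn => by simp [zero_pow hn]]
  simp [hγ0]

theorem hasSum_weightedKernel_sub {γ : ℕ → ℝ} {a b : ℂ}
    (haa : Summable fun n : ℕ => (γ n : ℂ) * (conj a * a) ^ n)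
    (hbb : Summable fun n : ℕ => (γ n : ℂ) * (conj b * b) ^ n)
    (hab : Summable fun n : ℕ => (γ n : ℂ) * (conj b * a) ^ n)
    (hba : Summable fun n : ℕ => (γ n : ℂ) * (conj a * b) ^ n) :
    HasSum (fun n => ((γ n * normSq (a ^ n - b ^ n) : ℝ) : ℂ))
      (weightedKernel γ a a + weightedKernel γ b b
        - weightedKernel γ a b - weightedKernel γ b a) := by
  refine (((haa.hasSum.add hbb.hasSum).sub hab.hasSum).sub hba.hasSum).congr_fun fun n => ?_
  rw [ofReal_mul, normSq_eq_conj_mul_self, map_sub, map_pow, map_pow]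
  ring

theorem eq_of_weightedKernel_eq {γ : ℕ → ℝ} (hγ : ∀ n, 0 ≤ γ n) (hγ1 : 0 < γ 1) {a b : ℂ}
    (haa : Summable fun n : ℕ => (γ n : ℂ) * (conj a * a) ^ n)
    (hbb : Summable fun n : ℕ => (γ n : ℂ) * (conj b * b) ^ n)
    (hab : Summable fun n : ℕ => (γ n : ℂ) * (conj b * a) ^ n)
    (hba : Summable fun n : ℕ => (γ n : ℂ) * (conj a * b) ^ n)
    (hKa : weightedKernel γ a a = weightedKernel γ b a)
    (hKb : weightedKernel γ a b = weightedKernel γ b b) :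
    a = b := by
  have hsum := hasSum_weightedKernel_sub haa hbb hab hba
  rw [hKa, hKb, show weightedKernel γ b a + weightedKernel γ b b - weightedKernel γ b b
    - weightedKernel γ b a = ((0 : ℝ) : ℂ) by push_cast; ring, hasSum_ofReal] at hsum
  have hterms := (hasSum_zero_iff_of_nonneg fun n => mul_nonneg (hγ n) (normSq_nonneg _)).mp
    hsum
  have h1 : γ 1 * normSq (a - b) = 0 := by simpa using congrFun hterms 1
  simpa [hγ1.ne', sub_eq_zero] using h1

theorem weightedKernel_eq_of_map_eq {γ : ℕ → ℝ} (hγ0 : γ 0 = 1) {F φ : ℂ → ℂ} {s : Set ℂ}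
    (h0 : (0 : ℂ) ∈ s)
    (heq : ∀ z ∈ s, ∀ w ∈ s,
      F z * conj (F w) * weightedKernel γ (φ z) (φ w) = weightedKernel γ z w)
    {a b : ℂ} (ha : a ∈ s) (hb : b ∈ s) (hφ : φ a = φ b) {w : ℂ} (hw : w ∈ s) :
    weightedKernel γ a w = weightedKernel γ b w := by
  have hFa := heq a ha 0 h0
  have hFb := heq b hb 0 h0
  rw [weightedKernel_zero_right hγ0, hφ, mul_assoc] at hFa
  rw [weightedKernel_zero_right hγ0, mul_assoc] at hFb
  have hFab : F a = F b := mul_right_cancel₀ (right_ne_zero_of_mul_eq_one hFb)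
    (hFa.trans hFb.symm)
  rw [← heq a ha w hw, ← heq b hb w hw, hφ, hFab]

theorem stmt11_general (γ : ℕ → ℝ) (hpos : ∀ n, 0 < γ n) (hγ0 : γ 0 = 1)
    (F φ : ℂ → ℂ)
    (hK : ∀ z ∈ ball (0 : ℂ) 1, ∀ w ∈ ball (0 : ℂ) 1,
      Summable (fun n : ℕ => ((γ n : ℝ) : ℂ) * ((starRingEnd ℂ) w * z) ^ n))
    (heq : ∀ z ∈ ball (0 : ℂ) 1, ∀ w ∈ ball (0 : ℂ) 1,
      F z * (starRingEnd ℂ) (F w)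
          * (∑' n : ℕ, ((γ n : ℝ) : ℂ) * ((starRingEnd ℂ) (φ w) * φ z) ^ n)
        = ∑' n : ℕ, ((γ n : ℝ) : ℂ) * ((starRingEnd ℂ) w * z) ^ n) :
    Set.InjOn φ (ball (0 : ℂ) 1) := by
  intro a ha b hb hφ
  have hKw := fun w (hw : w ∈ ball (0 : ℂ) 1) =>
    weightedKernel_eq_of_map_eq hγ0 (mem_ball_self one_pos) heq ha hb hφ hw
  exact eq_of_weightedKernel_eq (fun n => (hpos n).le) (hpos 1) (hK a ha a ha) (hK b hb b hb)
    (hK a ha b hb) (hK b hb a ha) (hKw a ha) (hKw b hb)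

/-- If `K(z,w) = ∑ γ(n)(conj(w)z)^n` with `γ > 0`, `γ(0) = 1`, converges on `𝔻 × 𝔻`, and
analytic `F`, analytic self-map `φ` of `𝔻` satisfy `F(z)conj(F(w))K(φ(z),φ(w)) = K(z,w)`,
then `φ` is injective on `𝔻`. -/
theorem stmt11 (γ : ℕ → ℝ) (hpos : ∀ n, 0 < γ n) (hγ0 : γ 0 = 1)
    (F φ : ℂ → ℂ)
    (hF : DifferentiableOn ℂ F (ball (0 : ℂ) 1))
    (hφd : DifferentiableOn ℂ φ (ball (0 : ℂ) 1))
    (hφm : Set.MapsTo φ (ball (0 : ℂ) 1) (ball (0 : ℂ) 1))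
    (hK : ∀ z ∈ ball (0 : ℂ) 1, ∀ w ∈ ball (0 : ℂ) 1,
      Summable (fun n : ℕ => ((γ n : ℝ) : ℂ) * ((starRingEnd ℂ) w * z) ^ n))
    (heq : ∀ z ∈ ball (0 : ℂ) 1, ∀ w ∈ ball (0 : ℂ) 1,
      F z * (starRingEnd ℂ) (F w)
          * (∑' n : ℕ, ((γ n : ℝ) : ℂ) * ((starRingEnd ℂ) (φ w) * φ z) ^ n)
        = ∑' n : ℕ, ((γ n : ℝ) : ℂ) * ((starRingEnd ℂ) w * z) ^ n) :
    Set.InjOn φ (ball (0 : ℂ) 1) :=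
  stmt11_general γ hpos hγ0 F φ hK heq
end

section
/- Let K(z,w) = ∑_{n≥0} γ(n)(conj(w)z)^n with γ(n) > 0, γ(0) = 1, and assume ∑_{n≥0} γ(n) < ∞. Suppose analytic F : 𝔻 → ℂ and analytic φ : 𝔻 → 𝔻 satisfy F(z)conj(F(w))K(φ(z),φ(w)) = K(z,w) for all z, w ∈ 𝔻 and F is bounded on 𝔻. Then F is a constant of modulus one and φ(z) = λz for some constant λ with |λ| = 1. -/
/-!
On the diagonal the hypothesis reads `‖F z‖² k(‖φ z‖²) = k(‖z‖²)`, where `k t = ∑ γₙ tⁿ` is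
strictly increasing on `[0, 1]` and, by Abel's theorem, left-continuous at `1`. Hence
`‖F‖² ≥ k(r²) / k(1)` on the circle `‖z‖ = r`; as `F` has no zeros, the minimum modulus principle
gives `‖F 0‖² ≥ k(r²) / k(1) → 1`. The identity at `0` then forces `φ 0 = 0` and `‖F 0‖ = 1`.
By the Schwarz lemma `‖φ z‖ ≤ ‖z‖`, so `‖F‖ ≥ 1 = ‖F 0‖` and `F` is constant; the identity then
gives `‖φ z‖ = ‖z‖`, and the equality case of the Schwarz lemma makes `φ` a rotation.
-/

open Complex Metric Filter Topology Set ComplexConjugate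

noncomputable def diagKernel (γ : ℕ → ℝ) (t : ℝ) : ℝ := ∑' n, γ n * t ^ n

section DiagKernel

variable {γ : ℕ → ℝ}

theorem diagKernel_zero : diagKernel γ 0 = γ 0 := by
  rw [diagKernel, tsum_eq_single 0 fun n hn => by simp [hn]]
  simp

theorem summable_mul_pow_of_le_one (hγ : ∀ n, 0 ≤ γ n) (hsum : Summable γ) {t : ℝ}
    (ht₀ : 0 ≤ t) (ht₁ : t ≤ 1) : Summable fun n => γ n * t ^ n :=
  hsum.of_nonneg_of_le (fun n => mul_nonneg (hγ n) (pow_nonneg ht₀ n))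
    fun n => mul_le_of_le_one_right (hγ n) (pow_le_one₀ ht₀ ht₁)

theorem diagKernel_strictMonoOn (hγ : ∀ n, 0 ≤ γ n) (hsum : Summable γ)
    (hγpos : ∃ n ≠ 0, 0 < γ n) : StrictMonoOn (diagKernel γ) (Icc 0 1) := by
  rintro t ⟨ht₀, -⟩ t' ⟨ht'₀, ht'₁⟩ htt'
  obtain ⟨m, hm, hγm⟩ := hγpos
  exact Summable.tsum_lt_tsum_of_nonneg (i := m) (fun n => mul_nonneg (hγ n) (pow_nonneg ht₀ n))
    (fun n => mul_le_mul_of_nonneg_left (pow_le_pow_left₀ ht₀ htt'.le n) (hγ n))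
    (mul_lt_mul_of_pos_left (pow_lt_pow_left₀ htt' ht₀ hm) hγm)
    (summable_mul_pow_of_le_one hγ hsum ht'₀ ht'₁)

theorem tendsto_diagKernel_nhdsLT_one (hsum : Summable γ) :
    Tendsto (diagKernel γ) (𝓝[<] 1) (𝓝 (diagKernel γ 1)) := by
  have h1 : diagKernel γ 1 = ∑' n, γ n := by simp [diagKernel]
  exact h1 ▸ Real.tendsto_tsum_powerSeries_nhdsWithin_lt hsum.hasSum.tendsto_sum_nat

theorem tsum_ofReal_mul_conj_mul_self_pow (u : ℂ) :
    ∑' n, (γ n : ℂ) * (conj u * u) ^ n = (diagKernel γ (‖u‖ ^ 2) : ℂ) := by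
  simp [diagKernel, Complex.ofReal_tsum, conj_mul']

end DiagKernel

section MinimumModulus

variable {E : Type*} [NormedAddCommGroup E] [NormedSpace ℂ E] {f : E → ℂ} {U : Set E} {c : E}

theorem Complex.le_norm_of_forall_mem_frontier_le_norm [Nontrivial E] (hU : Bornology.IsBounded U)
    (hd : DiffContOnCl ℂ f U) (hne : ∀ z ∈ closure U, f z ≠ 0) {C : ℝ}
    (hC : ∀ z ∈ frontier U, C ≤ ‖f z‖) {z : E} (hz : z ∈ closure U) : C ≤ ‖f z‖ := by
  rcases le_or_gt C 0 with hC₀ | hC₀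
  · exact hC₀.trans (norm_nonneg _)
  have hinv : ∀ w ∈ frontier U, ‖(f w)⁻¹‖ ≤ C⁻¹ := fun w hw => by
    rw [norm_inv]; exact inv_anti₀ hC₀ (hC w hw)
  have := norm_le_of_forall_mem_frontier_norm_le hU (hd.inv hne) hinv hz
  rw [Pi.inv_apply, norm_inv] at this
  exact (inv_le_inv₀ (norm_pos_iff.2 (hne z hz)) hC₀).1 this

theorem Complex.eqOn_of_isPreconnected_of_isMinOn_norm (hU : IsPreconnected U) (ho : IsOpen U)
    (hd : DifferentiableOn ℂ f U) (hne : ∀ z ∈ U, f z ≠ 0) (hcU : c ∈ U)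
    (hm : IsMinOn (norm ∘ f) U c) : EqOn f (Function.const E (f c)) U := by
  have hmax : IsMaxOn (norm ∘ f⁻¹) U c := fun z hz => by
    simpa [norm_inv] using inv_anti₀ (norm_pos_iff.2 (hne c hcU)) (hm hz)
  intro z hz
  simpa using congrArg Inv.inv
    (eqOn_of_isPreconnected_of_isMaxOn_norm hU ho (hd.inv hne) hcU hmax hz)

theorem Complex.le_norm_center_of_tendsto [Nontrivial E] {R a : ℝ} {m : ℝ → ℝ} (hR : 0 < R)
    (hd : DifferentiableOn ℂ f (ball c R)) (hne : ∀ z ∈ ball c R, f z ≠ 0)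
    (hm : Tendsto m (𝓝[<] R) (𝓝 a)) (hle : ∀ z ∈ ball c R, m (dist z c) ≤ ‖f z‖) :
    a ≤ ‖f c‖ := by
  refine le_of_tendsto hm ?_
  filter_upwards [Ioo_mem_nhdsLT hR] with r ⟨hr₀, hrR⟩
  have hcl : closure (ball c r) = closedBall c r := closure_ball c hr₀.ne'
  have hsub : closedBall c r ⊆ ball c R := closedBall_subset_ball hrR
  refine le_norm_of_forall_mem_frontier_le_norm isBounded_ball (hd.diffContOnCl_ball hsub)
    (fun z hz => hne z (hsub (hcl ▸ hz))) (fun z hz => ?_) (subset_closure (mem_ball_self hr₀))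
  rw [frontier_ball c hr₀.ne'] at hz
  simpa [mem_sphere.1 hz] using hle z (hsub (sphere_subset_closedBall hz))

end MinimumModulus

theorem Complex.exists_eq_mul_of_norm_eq {φ : ℂ → ℂ} {R : ℝ} (hR : 0 < R)
    (hd : DifferentiableOn ℂ φ (ball 0 R)) (hnorm : ∀ z ∈ ball 0 R, ‖φ z‖ = ‖z‖) :
    ∃ l : ℂ, ‖l‖ = 1 ∧ ∀ z ∈ ball 0 R, φ z = l * z := by
  have h₀ : φ 0 = 0 := norm_eq_zero.1 ((hnorm 0 (mem_ball_self hR)).trans norm_zero)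
  have hmaps : MapsTo φ (ball 0 R) (closedBall (φ 0) R) := fun z hz => by
    simpa [h₀, hnorm z hz] using (mem_ball_zero_iff.1 hz).le
  have hz₀ : ((R / 2 : ℝ) : ℂ) ∈ ball 0 R := by
    rw [mem_ball_zero_iff, norm_real, Real.norm_of_nonneg (by positivity)]; linarith
  have hslope : ‖dslope φ 0 ((R / 2 : ℝ) : ℂ)‖ = R / R := by
    rw [dslope_of_ne _ (by simpa using hR.ne'), slope_def_field, h₀, norm_div, sub_zero, sub_zero,
      hnorm _ hz₀, div_self (by simpa using hR.ne'), div_self hR.ne']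
  obtain ⟨l, hl, hφ⟩ :=
    affine_of_mapsTo_ball_of_exists_norm_dslope_eq_div' hd hmaps ⟨_, hz₀, hslope⟩
  refine ⟨l, hl.trans (div_self hR.ne'), fun z hz => ?_⟩
  simpa [h₀, mul_comm] using hφ hz

theorem tendsto_sq_nhdsLT_one : Tendsto (fun r : ℝ => r ^ 2) (𝓝[<] 1) (𝓝[<] 1) := by
  refine tendsto_nhdsWithin_of_tendsto_nhds_of_eventually_within _ ?_ ?_
  · exact ((continuous_pow 2).tendsto' (1 : ℝ) 1 (one_pow 2)).mono_left nhdsWithin_le_nhds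
  · filter_upwards [Ioo_mem_nhdsLT (show (0 : ℝ) < 1 by norm_num)] with r hr
    exact pow_lt_one₀ hr.1.le hr.2 two_ne_zero

theorem sq_norm_mem_Icc_of_mem_ball {z : ℂ} (hz : z ∈ ball (0 : ℂ) 1) : ‖z‖ ^ 2 ∈ Icc (0 : ℝ) 1 :=
  ⟨by positivity, pow_le_one₀ (norm_nonneg z) (mem_ball_zero_iff.1 hz).le⟩

section DiagonalIdentity

variable {k : ℝ → ℝ} {F φ : ℂ → ℂ}

theorem pos_apply_sq_norm (hk : MonotoneOn k (Icc 0 1)) (hk₀ : 0 < k 0) {z : ℂ}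
    (hz : z ∈ ball (0 : ℂ) 1) : 0 < k (‖z‖ ^ 2) :=
  hk₀.trans_le <| hk (left_mem_Icc.2 zero_le_one) (sq_norm_mem_Icc_of_mem_ball hz)
    (sq_norm_mem_Icc_of_mem_ball hz).1

theorem apply_ne_zero_of_diagonal_identity (hk : MonotoneOn k (Icc 0 1)) (hk₀ : 0 < k 0)
    (hdiag : ∀ z ∈ ball (0 : ℂ) 1, ‖F z‖ ^ 2 * k (‖φ z‖ ^ 2) = k (‖z‖ ^ 2))
    {z : ℂ} (hz : z ∈ ball (0 : ℂ) 1) : F z ≠ 0 := fun hFz => by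
  have h := hdiag z hz
  rw [hFz, norm_zero, zero_pow two_ne_zero, zero_mul] at h
  exact (pos_apply_sq_norm hk hk₀ hz).ne h

theorem one_le_norm_sq_apply_zero_of_diagonal_identity (hk : MonotoneOn k (Icc 0 1))
    (hk₀ : 0 < k 0) (hk₁ : Tendsto k (𝓝[<] 1) (𝓝 (k 1)))
    (hF : DifferentiableOn ℂ F (ball (0 : ℂ) 1)) (hφm : MapsTo φ (ball (0 : ℂ) 1) (ball (0 : ℂ) 1))
    (hdiag : ∀ z ∈ ball (0 : ℂ) 1, ‖F z‖ ^ 2 * k (‖φ z‖ ^ 2) = k (‖z‖ ^ 2)) :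
    1 ≤ ‖F 0‖ ^ 2 := by
  have hkpos : 0 < k 1 :=
    hk₀.trans_le (hk (left_mem_Icc.2 zero_le_one) (right_mem_Icc.2 zero_le_one) zero_le_one)
  have hlim : Tendsto (fun r => k (r ^ 2) / k 1) (𝓝[<] 1) (𝓝 1) := by
    simpa [hkpos.ne'] using (hk₁.comp tendsto_sq_nhdsLT_one).div_const (k 1)
  refine (le_norm_center_of_tendsto one_pos (hF.pow 2)
    (fun z hz => pow_ne_zero 2 (apply_ne_zero_of_diagonal_identity hk hk₀ hdiag hz)) hlim
    fun z hz => ?_).trans_eq (norm_pow _ _)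
  rw [dist_zero_right, div_le_iff₀ hkpos, Pi.pow_apply, norm_pow, ← hdiag z hz]
  have hφz := sq_norm_mem_Icc_of_mem_ball (hφm hz)
  exact mul_le_mul_of_nonneg_left (hk hφz (right_mem_Icc.2 zero_le_one) hφz.2) (by positivity)

theorem apply_zero_of_diagonal_identity (hk : StrictMonoOn k (Icc 0 1)) (hk₀ : 0 < k 0)
    (hk₁ : Tendsto k (𝓝[<] 1) (𝓝 (k 1))) (hF : DifferentiableOn ℂ F (ball (0 : ℂ) 1))
    (hφm : MapsTo φ (ball (0 : ℂ) 1) (ball (0 : ℂ) 1))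
    (hdiag : ∀ z ∈ ball (0 : ℂ) 1, ‖F z‖ ^ 2 * k (‖φ z‖ ^ 2) = k (‖z‖ ^ 2)) :
    φ 0 = 0 ∧ ‖F 0‖ = 1 := by
  have h0 : (0 : ℂ) ∈ ball (0 : ℂ) 1 := mem_ball_self one_pos
  have hF0 := one_le_norm_sq_apply_zero_of_diagonal_identity hk.monotoneOn hk₀ hk₁ hF hφm hdiag
  have h := hdiag 0 h0
  rw [norm_zero, zero_pow two_ne_zero] at h
  have hφ0 := sq_norm_mem_Icc_of_mem_ball (hφm h0)
  have hle : k 0 ≤ k (‖φ 0‖ ^ 2) := hk.monotoneOn (left_mem_Icc.2 zero_le_one) hφ0 hφ0.1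
  -- `‖F 0‖² ≥ 1` and `k (‖φ 0‖²) ≥ k 0` force equality in `‖F 0‖² k (‖φ 0‖²) = k 0`.
  have hkφ : k (‖φ 0‖ ^ 2) = k 0 := by nlinarith
  rw [hkφ] at h
  refine ⟨by simpa using hk.injOn hφ0 (left_mem_Icc.2 zero_le_one) hkφ, ?_⟩
  refine (pow_eq_one_iff_of_nonneg (norm_nonneg _) two_ne_zero).1 ?_
  exact (mul_eq_right₀ hk₀.ne').1 h

theorem eqOn_const_of_diagonal_identity (hk : MonotoneOn k (Icc 0 1)) (hk₀ : 0 < k 0)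
    (hF : DifferentiableOn ℂ F (ball (0 : ℂ) 1)) (hφd : DifferentiableOn ℂ φ (ball (0 : ℂ) 1))
    (hφm : MapsTo φ (ball (0 : ℂ) 1) (ball (0 : ℂ) 1)) (hφ0 : φ 0 = 0) (hF0 : ‖F 0‖ = 1)
    (hdiag : ∀ z ∈ ball (0 : ℂ) 1, ‖F z‖ ^ 2 * k (‖φ z‖ ^ 2) = k (‖z‖ ^ 2)) :
    EqOn F (Function.const ℂ (F 0)) (ball 0 1) := by
  refine eqOn_of_isPreconnected_of_isMinOn_norm (convex_ball 0 1).isPreconnected isOpen_ball hF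
    (fun z hz => apply_ne_zero_of_diagonal_identity hk hk₀ hdiag hz) (mem_ball_self one_pos)
    fun z hz => ?_
  have hschwarz : ‖φ z‖ ≤ ‖z‖ :=
    norm_le_norm_of_mapsTo_ball hφd (hφm.mono_right ball_subset_closedBall) hφ0
      (mem_ball_zero_iff.1 hz)
  have hle : 1 * k (‖φ z‖ ^ 2) ≤ ‖F z‖ ^ 2 * k (‖φ z‖ ^ 2) := by
    rw [one_mul, hdiag z hz]
    exact hk (sq_norm_mem_Icc_of_mem_ball (hφm hz)) (sq_norm_mem_Icc_of_mem_ball hz) (by gcongr)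
  have h1 := le_of_mul_le_mul_right hle (pos_apply_sq_norm hk hk₀ (hφm hz))
  show ‖F 0‖ ≤ ‖F z‖
  rw [hF0]
  exact (one_le_pow_iff_of_nonneg (norm_nonneg _) two_ne_zero).1 h1

theorem exists_eq_const_and_eq_mul_of_diagonal_identity (hk : StrictMonoOn k (Icc 0 1))
    (hk₀ : 0 < k 0) (hk₁ : Tendsto k (𝓝[<] 1) (𝓝 (k 1)))
    (hF : DifferentiableOn ℂ F (ball (0 : ℂ) 1)) (hφd : DifferentiableOn ℂ φ (ball (0 : ℂ) 1))
    (hφm : MapsTo φ (ball (0 : ℂ) 1) (ball (0 : ℂ) 1))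
    (hdiag : ∀ z ∈ ball (0 : ℂ) 1, ‖F z‖ ^ 2 * k (‖φ z‖ ^ 2) = k (‖z‖ ^ 2)) :
    (∃ c : ℂ, ‖c‖ = 1 ∧ ∀ z ∈ ball (0 : ℂ) 1, F z = c) ∧
      ∃ l : ℂ, ‖l‖ = 1 ∧ ∀ z ∈ ball (0 : ℂ) 1, φ z = l * z := by
  obtain ⟨hφ0, hF0⟩ := apply_zero_of_diagonal_identity hk hk₀ hk₁ hF hφm hdiag
  have hFconst := eqOn_const_of_diagonal_identity hk.monotoneOn hk₀ hF hφd hφm hφ0 hF0 hdiag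
  have hφnorm : ∀ z ∈ ball (0 : ℂ) 1, ‖φ z‖ = ‖z‖ := fun z hz => by
    have h := hdiag z hz
    rw [hFconst hz, Function.const_apply, hF0, one_pow, one_mul] at h
    have := hk.injOn (sq_norm_mem_Icc_of_mem_ball (hφm hz)) (sq_norm_mem_Icc_of_mem_ball hz) h
    exact (pow_left_inj₀ (norm_nonneg _) (norm_nonneg _) two_ne_zero).1 this
  exact ⟨⟨F 0, hF0, hFconst⟩, exists_eq_mul_of_norm_eq one_pos hφd hφnorm⟩

end DiagonalIdentity

theorem stmt12_general (γ : ℕ → ℝ) (hpos : ∀ n, 0 < γ n)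
    (hγsum : Summable γ)
    (F φ : ℂ → ℂ)
    (hF : DifferentiableOn ℂ F (ball (0 : ℂ) 1))
    (hφd : DifferentiableOn ℂ φ (ball (0 : ℂ) 1))
    (hφm : Set.MapsTo φ (ball (0 : ℂ) 1) (ball (0 : ℂ) 1))
    (heq : ∀ z ∈ ball (0 : ℂ) 1, ∀ w ∈ ball (0 : ℂ) 1,
      F z * (starRingEnd ℂ) (F w)
          * (∑' n : ℕ, ((γ n : ℝ) : ℂ) * ((starRingEnd ℂ) (φ w) * φ z) ^ n)
        = ∑' n : ℕ, ((γ n : ℝ) : ℂ) * ((starRingEnd ℂ) w * z) ^ n) :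
    (∃ c : ℂ, ‖c‖ = 1 ∧ ∀ z ∈ ball (0 : ℂ) 1, F z = c)
    ∧ (∃ l : ℂ, ‖l‖ = 1 ∧ ∀ z ∈ ball (0 : ℂ) 1, φ z = l * z) := by
  have hγ : ∀ n, 0 ≤ γ n := fun n => (hpos n).le
  refine exists_eq_const_and_eq_mul_of_diagonal_identity
    (diagKernel_strictMonoOn hγ hγsum ⟨1, one_ne_zero, hpos 1⟩)
    (by simpa [diagKernel_zero] using hpos 0) (tendsto_diagKernel_nhdsLT_one hγsum)
    hF hφd hφm fun z hz => ?_
  have h := heq z hz z hz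
  rw [tsum_ofReal_mul_conj_mul_self_pow, tsum_ofReal_mul_conj_mul_self_pow, mul_conj'] at h
  exact_mod_cast h

/-- Kernel bounded on the diagonal (`∑ γ(n) < ∞`): if bounded analytic `F` and analytic
self-map `φ` of `𝔻` satisfy `F(z)conj(F(w))K(φ(z),φ(w)) = K(z,w)`, then `F` is a unimodular
constant and `φ` is a rotation. -/
theorem stmt12 (γ : ℕ → ℝ) (hpos : ∀ n, 0 < γ n) (hγ0 : γ 0 = 1)
    (hγsum : Summable γ)
    (F φ : ℂ → ℂ)
    (hF : DifferentiableOn ℂ F (ball (0 : ℂ) 1))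
    (hFbdd : ∃ M : ℝ, ∀ z ∈ ball (0 : ℂ) 1, ‖F z‖ ≤ M)
    (hφd : DifferentiableOn ℂ φ (ball (0 : ℂ) 1))
    (hφm : Set.MapsTo φ (ball (0 : ℂ) 1) (ball (0 : ℂ) 1))
    (heq : ∀ z ∈ ball (0 : ℂ) 1, ∀ w ∈ ball (0 : ℂ) 1,
      F z * (starRingEnd ℂ) (F w)
          * (∑' n : ℕ, ((γ n : ℝ) : ℂ) * ((starRingEnd ℂ) (φ w) * φ z) ^ n)
        = ∑' n : ℕ, ((γ n : ℝ) : ℂ) * ((starRingEnd ℂ) w * z) ^ n) :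
    (∃ c : ℂ, ‖c‖ = 1 ∧ ∀ z ∈ ball (0 : ℂ) 1, F z = c)
    ∧ (∃ l : ℂ, ‖l‖ = 1 ∧ ∀ z ∈ ball (0 : ℂ) 1, φ z = l * z) :=
  stmt12_general γ hpos hγsum F φ hF hφd hφm heq
end
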